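/- arXiv:2404.05900 — 9 statements merged into one kernel-verified Lean document; each statement's English description precedes it below -/
import Mathlib

section
/- Let Ξ = {ξ ∈ ℝ^{Nξ} : A ξ ≤ b} be a nonempty bounded polyhedron, let g : ℝ^{Nξ} → ℝ^{Ng} have components g_s(ξ) = max_{t=1..T} g_{st}ᵀ ξ, let c ∈ ℝ^{Ng}, and suppose there exists ξ̃ in the interior of Ξ with g(ξ̃) < c componentwise. Let f : Ξ → ℝ be continuous. Then the moment problem sup{∫ f(ξ) μ(dξ) : μ a nonnegative Borel measure supported on Ξ, ∫ μ(dξ) = 1, ∫ g(ξ) μ(dξ) ≤ c componentwise} has the same optimal value as the dual semi-infinite program inf{φ + cᵀψ : φ ∈ ℝ, ψ ∈ ℝ^{Ng} with ψ ≥ 0, and φ + ψᵀ g(ξ) ≥ f(ξ) for all ξ ∈ Ξ}, and the dual infimum is attained by some finite (φ*, ψ*) with ψ* ≥ 0. -/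
/-!
Finitely supported probability measures on `Ξ` realize every point of the convex hull `K` of
`{(g ξ, f ξ) | ξ ∈ Ξ}` as a moment vector `(∫ g dμ, ∫ f dμ)`, so the primal value is at least
`P = sup {y | (x, y) ∈ K, x ≤ c}`. Separating `(c, P)` from `K` plus the open cone
`{(x, y) | x > 0, y < 0}` yields a multiplier `ψ ≥ 0` with `y ≤ P + ψ ⬝ (x - c)` on `K`, the
Slater point excluding a vertical hyperplane; so `(P - c ⬝ ψ, ψ)` is dual feasible with value `P`.
Integrating the dual constraint gives weak duality, which closes the gap.
-/

open MeasureTheory Matrix Set Filter Topology Pointwise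

lemma le_of_forall_pos_add_mul_lt {a b M : ℝ} (h : ∀ t > 0, a + t * b < M) : a ≤ M := by
  have hlim : Tendsto (fun t : ℝ => a + t * b) (𝓝[>] 0) (𝓝 a) := by
    simpa using ((show Continuous fun t : ℝ => a + t * b by fun_prop).tendsto 0).mono_left
      nhdsWithin_le_nhds
  exact le_of_tendsto hlim (eventually_nhdsWithin_of_forall fun t ht => (h t ht).le)

lemma nonpos_of_forall_pos_add_mul_lt {a b M : ℝ} (h : ∀ t > 0, a + t * b < M) : b ≤ 0 := by
  by_contra! hb
  have := h (|M - a| / b + 1) (by positivity)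
  have : |M - a| + b = (|M - a| / b + 1) * b := by field_simp
  linarith [le_abs_self (M - a)]

lemma ContinuousLinearMap.apply_pi_prod {ι : Type*} [Fintype ι] [DecidableEq ι]
    (L : StrongDual ℝ ((ι → ℝ) × ℝ)) (z : ι → ℝ) (r : ℝ) :
    L (z, r) = z ⬝ᵥ (fun s => L (Pi.single s 1, 0)) + r * L (0, 1) := by
  have hz : L (z, 0) = z ⬝ᵥ fun s => L (Pi.single s 1, 0) := by
    rw [show L (z, 0) = (L.comp (ContinuousLinearMap.inl ℝ _ ℝ) : (ι → ℝ) →ₗ[ℝ] ℝ) z from rfl,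
      LinearMap.pi_apply_eq_sum_univ]
    have hsingle (s : ι) : (fun j => if s = j then (1 : ℝ) else 0) = Pi.single s 1 := by
      ext j; simp [Pi.single_apply, eq_comm]
    simp [hsingle, dotProduct]
  have hr : L (0, r) = r * L (0, 1) := by
    simpa using L.map_smul r ((0 : ι → ℝ), (1 : ℝ))
  rw [← hz, ← hr, ← map_add, Prod.mk_add_mk, add_zero, zero_add]

section LagrangeMultiplier

variable {ι : Type*} [Fintype ι] {K : Set ((ι → ℝ) × ℝ)} {c : ι → ℝ} {P : ℝ} {q₀ : (ι → ℝ) × ℝ}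

theorem Convex.exists_separating_functional_of_slater [DecidableEq ι] (hK : Convex ℝ K)
    (hP : ∀ q ∈ K, q.1 ≤ c → q.2 ≤ P) (hq₀ : q₀ ∈ K) (hslater : ∀ s, q₀.1 s < c s) :
    ∃ L : StrongDual ℝ ((ι → ℝ) × ℝ),
      (∀ s, L (Pi.single s 1, 0) ≤ 0) ∧ 0 < L (0, 1) ∧ ∀ q ∈ K, L q ≤ L (c, P) := by
  set O : Set ((ι → ℝ) × ℝ) := (univ.pi fun _ => Ioi 0) ×ˢ Iio 0
  have hO : IsOpen O := (isOpen_set_pi finite_univ fun _ _ => isOpen_Ioi).prod isOpen_Iio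
  have hO_conv : Convex ℝ O := (convex_pi fun _ _ => convex_Ioi 0).prod (convex_Iio 0)
  have hcP : (c, P) ∉ K + O := by
    rintro ⟨q, hq, o, ⟨ho₁, ho₂⟩, hqo⟩
    rw [Prod.ext_iff] at hqo
    have hq₁ : q.1 ≤ c := fun s => by
      have := ho₁ s (mem_univ s)
      have := congrFun hqo.1 s
      simp only [Prod.fst_add, Pi.add_apply, mem_Ioi] at *
      linarith
    have := hP q hq hq₁
    simp only [Prod.snd_add, mem_Iio] at hqo ho₂
    linarith
  obtain ⟨L, hL⟩ := geometric_hahn_banach_open_point (hK.add hO_conv) hO.add_left hcP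
  have hKO : ∀ q ∈ K, ∀ o ∈ O, L q + L o < L (c, P) := fun q hq o ho => by
    simpa using hL _ (add_mem_add hq ho)
  -- `O` is a cone: sending `o ∈ O` to infinity along a ray gives the signs of `L`, sending it to
  -- `0` gives the bound on `K`, and the Slater point rules out `L (0, 1) = 0`.
  refine ⟨L, fun s => ?_, ?_, fun q hq => ?_⟩
  · refine nonpos_of_forall_pos_add_mul_lt (a := L q₀ + L (1, -1)) (M := L (c, P)) fun t ht => ?_
    have := hKO q₀ hq₀ ((1, -1) + t • (Pi.single s 1, 0)) ⟨fun s' _ => ?_, by simp⟩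
    · rwa [map_add, map_smul, smul_eq_mul, ← add_assoc] at this
    · rcases eq_or_ne s' s with rfl | hs
      · simp only [Prod.fst_add, Prod.smul_mk, Pi.add_apply, Pi.one_apply, Pi.smul_apply,
          Pi.single_eq_same, smul_eq_mul, mul_one, mem_Ioi]
        positivity
      · simp [hs]
  · have h := hKO q₀ hq₀ (c - q₀.1, -1) ⟨fun s _ => sub_pos.2 (hslater s), by simp⟩
    have hq₀P : q₀.2 ≤ P := hP q₀ hq₀ fun s => (hslater s).le
    rw [← map_add, Prod.mk_add_mk, add_sub_cancel, L.apply_pi_prod c, L.apply_pi_prod c P] at h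
    nlinarith
  · refine le_of_forall_pos_add_mul_lt (b := L (1, -1)) fun t ht => ?_
    have := hKO q hq (t • (1, -1)) ⟨fun s _ => by simpa using ht, by simpa using ht⟩
    rwa [map_smul, smul_eq_mul] at this

theorem Convex.exists_lagrange_multiplier (hK : Convex ℝ K) (hP : ∀ q ∈ K, q.1 ≤ c → q.2 ≤ P)
    (hq₀ : q₀ ∈ K) (hslater : ∀ s, q₀.1 s < c s) :
    ∃ ψ : ι → ℝ, 0 ≤ ψ ∧ ∀ q ∈ K, q.2 ≤ P + ψ ⬝ᵥ (q.1 - c) := by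
  classical
  obtain ⟨L, ha, hβ, hKle⟩ := hK.exists_separating_functional_of_slater hP hq₀ hslater
  set a : ι → ℝ := fun s => L (Pi.single s 1, 0)
  set β : ℝ := L (0, 1)
  refine ⟨-β⁻¹ • a, fun s => ?_, fun q hq => ?_⟩
  · simpa using mul_nonneg_of_nonpos_of_nonpos (neg_nonpos.2 (inv_pos.2 hβ).le) (ha s)
  · have h := hKle q hq
    rw [← Prod.mk.eta (p := q), L.apply_pi_prod q.1, L.apply_pi_prod c P] at h
    rw [smul_dotProduct, dotProduct_sub, dotProduct_comm a, dotProduct_comm a, smul_eq_mul,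
      ← sub_nonneg]
    have : P + -β⁻¹ * (q.1 ⬝ᵥ a - c ⬝ᵥ a) - q.2 = (c ⬝ᵥ a + P * β - (q.1 ⬝ᵥ a + q.2 * β)) / β := by
      field_simp
      ring
    rw [this]
    exact div_nonneg (sub_nonneg.2 h) hβ.le

end LagrangeMultiplier

section Moments

variable {X : Type*} [MeasurableSpace X]

theorem exists_isProbabilityMeasure_integral_eq_of_mem_convexHull [MeasurableSingletonClass X]
    {E : Type*} [NormedAddCommGroup E] [NormedSpace ℝ E] [CompleteSpace E] {Ξ : Set X}
    {Φ : X → E} {p : E} (hp : p ∈ convexHull ℝ (Φ '' Ξ)) :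
    ∃ μ : Measure X, IsProbabilityMeasure μ ∧ μ Ξᶜ = 0 ∧ Integrable Φ μ ∧ ∫ x, Φ x ∂μ = p := by
  refine (convexHull_min (t := {p | ∃ μ : Measure X, IsProbabilityMeasure μ ∧ μ Ξᶜ = 0 ∧
    Integrable Φ μ ∧ ∫ x, Φ x ∂μ = p}) ?_ ?_) hp
  · rintro _ ⟨x, hx, rfl⟩
    refine ⟨Measure.dirac x, inferInstance, ?_, integrable_dirac enorm_lt_top, integral_dirac Φ x⟩
    simp [hx]
  · rintro _ ⟨μ, hμ, hμΞ, hμΦ, rfl⟩ _ ⟨ν, hν, hνΞ, hνΦ, rfl⟩ a b ha hb hab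
    refine ⟨ENNReal.ofReal a • μ + ENNReal.ofReal b • ν, ⟨?_⟩, by simp [hμΞ, hνΞ],
      (hμΦ.smul_measure ENNReal.ofReal_ne_top).add_measure
        (hνΦ.smul_measure ENNReal.ofReal_ne_top), ?_⟩
    · simp [← ENNReal.ofReal_add ha hb, hab]
    · rw [integral_add_measure (hμΦ.smul_measure ENNReal.ofReal_ne_top)
        (hνΦ.smul_measure ENNReal.ofReal_ne_top), integral_smul_measure, integral_smul_measure,
        ENNReal.toReal_ofReal ha, ENNReal.toReal_ofReal hb]

variable [TopologicalSpace X] [T2Space X] [OpensMeasurableSpace X]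

theorem ContinuousOn.integrable_of_measure_compl_eq_zero {E : Type*} [NormedAddCommGroup E]
    {Ξ : Set X} (hΞ : IsCompact Ξ) {f : X → E} (hf : ContinuousOn f Ξ) {μ : Measure X}
    [IsFiniteMeasure μ] (hμ : μ Ξᶜ = 0) : Integrable f μ := by
  rw [← Measure.restrict_eq_self_of_ae_mem (ae_iff.2 hμ)]
  exact hf.integrableOn_compact hΞ

theorem integral_le_dual_objective {ι : Type*} [Fintype ι] {Ξ : Set X} (hΞ : IsCompact Ξ)
    {g : X → ι → ℝ} (hg : ContinuousOn g Ξ) {f : X → ℝ} (hf : ContinuousOn f Ξ) {c : ι → ℝ}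
    {μ : Measure X} [IsProbabilityMeasure μ] (hμΞ : μ Ξᶜ = 0) (hμc : ∀ s, ∫ x, g x s ∂μ ≤ c s)
    {φ : ℝ} {ψ : ι → ℝ} (hψ : 0 ≤ ψ) (hfeas : ∀ x ∈ Ξ, f x ≤ φ + ψ ⬝ᵥ g x) :
    ∫ x, f x ∂μ ≤ φ + c ⬝ᵥ ψ := by
  have hgs (s : ι) : Integrable (fun x => ψ s * g x s) μ :=
    (((continuous_apply s).comp_continuousOn hg).integrable_of_measure_compl_eq_zero
      hΞ hμΞ).const_mul _
  have hψg : Integrable (fun x => ψ ⬝ᵥ g x) μ := integrable_finsetSum _ fun s _ => hgs s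
  calc ∫ x, f x ∂μ ≤ ∫ x, φ + ψ ⬝ᵥ g x ∂μ :=
        integral_mono_ae (hf.integrable_of_measure_compl_eq_zero hΞ hμΞ)
          ((integrable_const φ).add hψg) ((ae_iff.2 hμΞ).mono hfeas)
    _ = φ + ψ ⬝ᵥ fun s => ∫ x, g x s ∂μ := by
        rw [integral_add (integrable_const φ) hψg]
        simp only [dotProduct, integral_finsetSum _ fun s _ => hgs s, integral_const_mul,
          integral_const, probReal_univ, one_smul]
    _ ≤ φ + c ⬝ᵥ ψ := by
        rw [dotProduct_comm c]
        gcongr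
        exact dotProduct_le_dotProduct_of_nonneg_left hμc hψ

end Moments

namespace MomentProblem

variable {X ι : Type*} [MeasurableSpace X] [Fintype ι]

def primalValues (Ξ : Set X) (g : X → ι → ℝ) (f : X → ℝ) (c : ι → ℝ) : Set EReal :=
  {v | ∃ μ : Measure X, IsProbabilityMeasure μ ∧ μ Ξᶜ = 0 ∧
    (∀ s, ∫ ξ, g ξ s ∂μ ≤ c s) ∧ v = ((∫ ξ, f ξ ∂μ : ℝ) : EReal)}

def dualValues (Ξ : Set X) (g : X → ι → ℝ) (f : X → ℝ) (c : ι → ℝ) : Set EReal :=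
  {v | ∃ (φ : ℝ) (ψ : ι → ℝ), 0 ≤ ψ ∧ (∀ ξ ∈ Ξ, f ξ ≤ φ + ψ ⬝ᵥ g ξ) ∧
    v = ((φ + c ⬝ᵥ ψ : ℝ) : EReal)}

theorem coe_mem_primalValues_of_mem_convexHull [MeasurableSingletonClass X] {Ξ : Set X}
    {g : X → ι → ℝ} {f : X → ℝ} {c : ι → ℝ} {q : (ι → ℝ) × ℝ}
    (hq : q ∈ convexHull ℝ ((fun ξ => (g ξ, f ξ)) '' Ξ)) (hqc : q.1 ≤ c) :
    (q.2 : EReal) ∈ primalValues Ξ g f c := by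
  obtain ⟨μ, hμ, hμΞ, hint, rfl⟩ := exists_isProbabilityMeasure_integral_eq_of_mem_convexHull hq
  refine ⟨μ, hμ, hμΞ, fun s => ?_, by rw [snd_integral hint]⟩
  rw [← eval_integral (integrable_pi_iff.1 hint.fst), ← fst_integral hint]
  exact hqc s

variable [TopologicalSpace X] [T2Space X] [OpensMeasurableSpace X]

theorem le_of_mem_primalValues_of_mem_dualValues {Ξ : Set X} (hΞ : IsCompact Ξ)
    {g : X → ι → ℝ} (hg : ContinuousOn g Ξ) {f : X → ℝ} (hf : ContinuousOn f Ξ) {c : ι → ℝ}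
    {v w : EReal} (hv : v ∈ primalValues Ξ g f c) (hw : w ∈ dualValues Ξ g f c) : v ≤ w := by
  obtain ⟨μ, hμ, hμΞ, hμc, rfl⟩ := hv
  obtain ⟨φ, ψ, hψ, hfeas, rfl⟩ := hw
  exact EReal.coe_le_coe_iff.2 (integral_le_dual_objective hΞ hg hf hμΞ hμc hψ hfeas)

theorem sSup_primalValues_eq_sInf_dualValues {Ξ : Set X} (hΞ : IsCompact Ξ)
    {g : X → ι → ℝ} (hg : ContinuousOn g Ξ) {f : X → ℝ} (hf : ContinuousOn f Ξ) {c : ι → ℝ}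
    {ξ₀ : X} (hξ₀ : ξ₀ ∈ Ξ) (hslater : ∀ s, g ξ₀ s < c s) :
    sSup (primalValues Ξ g f c) = sInf (dualValues Ξ g f c) ∧
      ∃ (φ : ℝ) (ψ : ι → ℝ), 0 ≤ ψ ∧ (∀ ξ ∈ Ξ, f ξ ≤ φ + ψ ⬝ᵥ g ξ) ∧
        ((φ + c ⬝ᵥ ψ : ℝ) : EReal) = sInf (dualValues Ξ g f c) := by
  set K := convexHull ℝ ((fun ξ => (g ξ, f ξ)) '' Ξ)
  set Y : Set ℝ := Prod.snd '' (K ∩ {q | q.1 ≤ c})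
  have hq₀ : (g ξ₀, f ξ₀) ∈ K := subset_convexHull ℝ _ (mem_image_of_mem _ hξ₀)
  have hY : BddAbove Y := Bornology.IsBounded.bddAbove <| Bornology.IsBounded.image_snd <|
    (isBounded_convexHull.2 (hΞ.image_of_continuousOn (hg.prodMk hf)).isBounded).subset
      inter_subset_left
  set P := sSup Y
  obtain ⟨ψ, hψ, hψK⟩ := (convex_convexHull ℝ _).exists_lagrange_multiplier
    (fun q hq hqc => le_csSup hY ⟨q, ⟨hq, hqc⟩, rfl⟩) hq₀ hslater
  have hfeas (ξ : X) (hξ : ξ ∈ Ξ) : f ξ ≤ P - c ⬝ᵥ ψ + ψ ⬝ᵥ g ξ := by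
    have := hψK _ (subset_convexHull ℝ _ (mem_image_of_mem _ hξ))
    rw [dotProduct_sub, dotProduct_comm ψ c] at this
    linarith
  have hP_dual : (P : EReal) ∈ dualValues Ξ g f c := ⟨P - c ⬝ᵥ ψ, ψ, hψ, hfeas, by ring_nf⟩
  have hP_le : (P : EReal) ≤ sSup (primalValues Ξ g f c) := by
    rw [Monotone.map_csSup_of_continuousAt (A := Y) continuous_coe_real_ereal.continuousAt
      EReal.coe_strictMono.monotone ⟨f ξ₀, _, ⟨hq₀, fun s => (hslater s).le⟩, rfl⟩ hY]
    refine sSup_le_sSup ?_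
    rintro _ ⟨_, ⟨q, ⟨hq, hqc⟩, rfl⟩, rfl⟩
    exact coe_mem_primalValues_of_mem_convexHull hq hqc
  have hsSup : sSup (primalValues Ξ g f c) = P := le_antisymm
    (sSup_le fun v hv => le_of_mem_primalValues_of_mem_dualValues hΞ hg hf hv hP_dual) hP_le
  have hsInf : sInf (dualValues Ξ g f c) = P := le_antisymm (sInf_le hP_dual) <|
    le_sInf fun w hw => hsSup ▸ sSup_le fun v hv =>
      le_of_mem_primalValues_of_mem_dualValues hΞ hg hf hv hw
  refine ⟨hsSup.trans hsInf.symm, P - c ⬝ᵥ ψ, ψ, hψ, hfeas, ?_⟩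
  rw [hsInf]
  ring_nf

end MomentProblem

theorem continuous_iSup_of_finite {X α ι : Type*} [TopologicalSpace X]
    [ConditionallyCompleteLinearOrder α] [TopologicalSpace α] [OrderTopology α] [Finite ι]
    {f : ι → X → α} (hf : ∀ i, Continuous (f i)) : Continuous fun x => ⨆ i, f i x := by
  rcases isEmpty_or_nonempty ι with hι | hι
  · simp only [iSup_of_empty']
    exact continuous_const
  · have := Fintype.ofFinite ι
    simp only [← Finset.sup'_univ_eq_ciSup]
    exact Continuous.finset_sup'_apply Finset.univ_nonempty fun i _ => hf i

theorem Matrix.isClosed_setOf_mulVec_le {m n : Type*} [Fintype n] (A : Matrix m n ℝ) (b : m → ℝ) :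
    IsClosed {x | A *ᵥ x ≤ b} :=
  isClosed_le (Continuous.matrix_mulVec continuous_const continuous_id) continuous_const

theorem stmt1_general (Nξ Ng T R : ℕ)
    (A : Matrix (Fin R) (Fin Nξ) ℝ) (b : Fin R → ℝ)
    (Ξ : Set (Fin Nξ → ℝ)) (hΞ : Ξ = {ξ | A.mulVec ξ ≤ b})
    (hΞbdd : Bornology.IsBounded Ξ)
    (gst : Fin Ng → Fin T → (Fin Nξ → ℝ))
    (g : (Fin Nξ → ℝ) → Fin Ng → ℝ)
    (hg : ∀ ξ s, g ξ s = ⨆ t : Fin T, gst s t ⬝ᵥ ξ)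
    (c : Fin Ng → ℝ)
    (hslater : ∃ ξt ∈ interior Ξ, ∀ s, g ξt s < c s)
    (f : (Fin Nξ → ℝ) → ℝ) (hf : ContinuousOn f Ξ)
    (primal dual : Set EReal)
    (hprimal : primal = {v : EReal |
      ∃ μ : Measure (Fin Nξ → ℝ), IsProbabilityMeasure μ ∧ μ Ξᶜ = 0 ∧
        (∀ s, (∫ ξ, g ξ s ∂μ) ≤ c s) ∧ v = ((∫ ξ, f ξ ∂μ : ℝ) : EReal)})
    (hdual : dual = {v : EReal |
      ∃ (φ : ℝ) (ψ : Fin Ng → ℝ), 0 ≤ ψ ∧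
        (∀ ξ ∈ Ξ, f ξ ≤ φ + ψ ⬝ᵥ g ξ) ∧
        v = ((φ + c ⬝ᵥ ψ : ℝ) : EReal)}) :
    sSup primal = sInf dual ∧
    ∃ (φ : ℝ) (ψ : Fin Ng → ℝ), 0 ≤ ψ ∧
      (∀ ξ ∈ Ξ, f ξ ≤ φ + ψ ⬝ᵥ g ξ) ∧
      ((φ + c ⬝ᵥ ψ : ℝ) : EReal) = sInf dual := by
  obtain ⟨ξ₀, hξ₀, hslater⟩ := hslater
  have hΞc : IsCompact Ξ :=
    Metric.isCompact_of_isClosed_isBounded (hΞ ▸ A.isClosed_setOf_mulVec_le b) hΞbdd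
  have hgc : Continuous g := by
    rw [show g = fun ξ s => ⨆ t, gst s t ⬝ᵥ ξ from funext₂ hg]
    exact continuous_pi fun s =>
      continuous_iSup_of_finite fun t => continuous_const.dotProduct continuous_id
  subst hprimal hdual
  exact MomentProblem.sSup_primalValues_eq_sInf_dualValues hΞc hgc.continuousOn hf
    (interior_subset hξ₀) hslater

/-- strong duality and dual attainment for the moment problem over the ambiguity
set `{μ : μ probability measure supported on Ξ, ∫ g dμ ≤ c}` against the semi-infinite dual
`inf{φ + cᵀψ : ψ ≥ 0, φ + ψᵀg(ξ) ≥ f(ξ) ∀ ξ ∈ Ξ}`. -/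
theorem stmt1 (Nξ Ng T R : ℕ) (hT : 0 < T)
    (A : Matrix (Fin R) (Fin Nξ) ℝ) (b : Fin R → ℝ)
    (Ξ : Set (Fin Nξ → ℝ)) (hΞ : Ξ = {ξ | A.mulVec ξ ≤ b})
    (hΞne : Ξ.Nonempty) (hΞbdd : Bornology.IsBounded Ξ)
    (gst : Fin Ng → Fin T → (Fin Nξ → ℝ))
    (g : (Fin Nξ → ℝ) → Fin Ng → ℝ)
    (hg : ∀ ξ s, g ξ s = ⨆ t : Fin T, gst s t ⬝ᵥ ξ)
    (c : Fin Ng → ℝ)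
    (hslater : ∃ ξt ∈ interior Ξ, ∀ s, g ξt s < c s)
    (f : (Fin Nξ → ℝ) → ℝ) (hf : ContinuousOn f Ξ)
    (primal dual : Set EReal)
    (hprimal : primal = {v : EReal |
      ∃ μ : Measure (Fin Nξ → ℝ), IsProbabilityMeasure μ ∧ μ Ξᶜ = 0 ∧
        (∀ s, (∫ ξ, g ξ s ∂μ) ≤ c s) ∧ v = ((∫ ξ, f ξ ∂μ : ℝ) : EReal)})
    (hdual : dual = {v : EReal |
      ∃ (φ : ℝ) (ψ : Fin Ng → ℝ), 0 ≤ ψ ∧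
        (∀ ξ ∈ Ξ, f ξ ≤ φ + ψ ⬝ᵥ g ξ) ∧
        v = ((φ + c ⬝ᵥ ψ : ℝ) : EReal)}) :
    sSup primal = sInf dual ∧
    ∃ (φ : ℝ) (ψ : Fin Ng → ℝ), 0 ≤ ψ ∧
      (∀ ξ ∈ Ξ, f ξ ≤ φ + ψ ⬝ᵥ g ξ) ∧
      ((φ + c ⬝ᵥ ψ : ℝ) : EReal) = sInf dual :=
  stmt1_general Nξ Ng T R A b Ξ hΞ hΞbdd gst g hg c hslater f hf primal dual hprimal hdual
end

section
/- The optimal value of the robust decision-rule problem inf over ψ ∈ ℝ^{Ng} with ψ ≥ 0, x ∈ X, w ∈ W, and functions y : Ξ → Y satisfying y(ξ) = y(ξ') whenever w ∘ ξ = w ∘ ξ' and T(ξ)x + V(ξ)w + W(ξ)y(ξ) ≤ Hξ for all ξ ∈ Ξ, of sup_{ξ ∈ Ξ} ( cᵀψ + ξᵀC x + ξᵀD w + ξᵀQ y(ξ) − ψᵀ g(ξ) ), equals the optimal value of the nested problem inf over ψ ∈ ℝ^{Ng} with ψ ≥ 0, x ∈ X, w ∈ W of sup_{ξ̄ ∈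 Ξ} [ inf over y ∈ Y satisfying T(ξ)x + V(ξ)w + W(ξ)y ≤ Hξ for all ξ ∈ Ξ(w, ξ̄), of sup_{ξ ∈ Ξ(w, ξ̄)} ( cᵀψ + ξᵀC x + ξᵀD w + ξᵀQ y − ψᵀ g(ξ) ) ]. -/
open Matrix

noncomputable section

/-- The information set `Ξ(w, ξ̄) = {ξ ∈ Ξ : w ∘ ξ = w ∘ ξ̄}`. -/
def obsSet {n : ℕ} (Ξ : Set (Fin n → ℝ)) (w ξb : Fin n → ℝ) : Set (Fin n → ℝ) :=
  {ξ ∈ Ξ | w * ξ = w * ξb}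

/-- The convex piecewise linear function `g` with `g_s(ξ) = max_{t} g_{st}ᵀ ξ`. -/
def gfun {Nξ Ng T : ℕ} (gst : Fin Ng → Fin T → (Fin Nξ → ℝ)) (ξ : Fin Nξ → ℝ) :
    Fin Ng → ℝ :=
  fun s => ⨆ t : Fin T, gst s t ⬝ᵥ ξ

/-- The linear objective `ξᵀC x + ξᵀD w + ξᵀQ y`. -/
def objR {Nξ Nx Ny : ℕ} (C : Matrix (Fin Nξ) (Fin Nx) ℝ) (D : Matrix (Fin Nξ) (Fin Nξ) ℝ)
    (Q : Matrix (Fin Nξ) (Fin Ny) ℝ) (x : Fin Nx → ℝ) (w : Fin Nξ → ℝ) (y : Fin Ny → ℝ)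
    (ξ : Fin Nξ → ℝ) : ℝ :=
  ξ ⬝ᵥ C.mulVec x + ξ ⬝ᵥ D.mulVec w + ξ ⬝ᵥ Q.mulVec y

/-- The uncertain constraints `T(ξ)x + V(ξ)w + W(ξ)y ≤ Hξ`, with rows
`[T(ξ)]_l = ξᵀT_l`, `[V(ξ)]_l = ξᵀV_l`, `[W(ξ)]_l = ξᵀW_l`. -/
def consOK {Nξ Nx Ny L : ℕ} (Tm : Fin L → Matrix (Fin Nξ) (Fin Nx) ℝ)
    (Vm : Fin L → Matrix (Fin Nξ) (Fin Nξ) ℝ) (Wm : Fin L → Matrix (Fin Nξ) (Fin Ny) ℝ)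
    (H : Matrix (Fin L) (Fin Nξ) ℝ) (x : Fin Nx → ℝ) (w : Fin Nξ → ℝ) (y : Fin Ny → ℝ)
    (ξ : Fin Nξ → ℝ) : Prop :=
  ∀ l, ξ ⬝ᵥ (Tm l).mulVec x + ξ ⬝ᵥ (Vm l).mulVec w + ξ ⬝ᵥ (Wm l).mulVec y ≤ H.mulVec ξ l

/-- the robust decision-rule problem (with the dual multipliers `ψ` as
here-and-now decisions and decision-dependent non-anticipativity constraints) has the same
optimal value as the nested min-max-min-max problem. -/
theorem stmt3 (Nξ Nx Ny Ng L R T : ℕ) (hT : 0 < T)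
    (A : Matrix (Fin R) (Fin Nξ) ℝ) (b : Fin R → ℝ)
    (Ξ : Set (Fin Nξ → ℝ)) (hΞ : Ξ = {ξ | A.mulVec ξ ≤ b})
    (hΞne : Ξ.Nonempty) (hΞbdd : Bornology.IsBounded Ξ)
    (Xset : Set (Fin Nx → ℝ)) (Wset : Set (Fin Nξ → ℝ))
    (hW : ∀ w ∈ Wset, ∀ i, w i = 0 ∨ w i = 1)
    (Yset : Set (Fin Ny → ℝ))
    (C : Matrix (Fin Nξ) (Fin Nx) ℝ) (D : Matrix (Fin Nξ) (Fin Nξ) ℝ)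
    (Q : Matrix (Fin Nξ) (Fin Ny) ℝ) (H : Matrix (Fin L) (Fin Nξ) ℝ)
    (Tm : Fin L → Matrix (Fin Nξ) (Fin Nx) ℝ)
    (Vm : Fin L → Matrix (Fin Nξ) (Fin Nξ) ℝ)
    (Wm : Fin L → Matrix (Fin Nξ) (Fin Ny) ℝ)
    (gst : Fin Ng → Fin T → (Fin Nξ → ℝ)) (c : Fin Ng → ℝ) :
    sInf {v : EReal |
      ∃ (ψ : Fin Ng → ℝ) (x : Fin Nx → ℝ) (w : Fin Nξ → ℝ)
        (y : (Fin Nξ → ℝ) → (Fin Ny → ℝ)),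
        0 ≤ ψ ∧ x ∈ Xset ∧ w ∈ Wset ∧
        (∀ ξ ∈ Ξ, y ξ ∈ Yset) ∧
        (∀ ξ ∈ Ξ, ∀ ξ' ∈ Ξ, w * ξ = w * ξ' → y ξ = y ξ') ∧
        (∀ ξ ∈ Ξ, consOK Tm Vm Wm H x w (y ξ) ξ) ∧
        v = ⨆ ξ ∈ Ξ,
          ((c ⬝ᵥ ψ + objR C D Q x w (y ξ) ξ - ψ ⬝ᵥ gfun gst ξ : ℝ) : EReal)}
    =
    sInf {v : EReal |
      ∃ (ψ : Fin Ng → ℝ) (x : Fin Nx → ℝ) (w : Fin Nξ → ℝ),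
        0 ≤ ψ ∧ x ∈ Xset ∧ w ∈ Wset ∧
        v = ⨆ ξb ∈ Ξ, ⨅ (y : Fin Ny → ℝ)
              (_ : y ∈ Yset ∧ ∀ ξ ∈ obsSet Ξ w ξb, consOK Tm Vm Wm H x w y ξ),
            ⨆ ξ ∈ obsSet Ξ w ξb,
              ((c ⬝ᵥ ψ + objR C D Q x w y ξ - ψ ⬝ᵥ gfun gst ξ : ℝ) : EReal)} := by
  classical
  apply le_antisymm
  · -- sInf LHS ≤ sInf RHS
    apply le_sInf
    rintro v ⟨ψ, x, w, hψ, hx, hw, rfl⟩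
    by_contra hlt
    push_neg at hlt
    obtain ⟨M, hVM, hMs⟩ := EReal.exists_between_coe_real hlt
    -- for each ξb ∈ Ξ pick a near-optimal y
    have key : ∀ ξb ∈ Ξ, ∃ yy : Fin Ny → ℝ,
        (yy ∈ Yset ∧ ∀ ξ ∈ obsSet Ξ w ξb, consOK Tm Vm Wm H x w yy ξ) ∧
        (⨆ ξ ∈ obsSet Ξ w ξb,
          ((c ⬝ᵥ ψ + objR C D Q x w yy ξ - ψ ⬝ᵥ gfun gst ξ : ℝ) : EReal)) < (M : EReal) := by
      intro ξb hξb
      have h1 : (⨅ (yy : Fin Ny → ℝ)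
          (_ : yy ∈ Yset ∧ ∀ ξ ∈ obsSet Ξ w ξb, consOK Tm Vm Wm H x w yy ξ),
          ⨆ ξ ∈ obsSet Ξ w ξb,
            ((c ⬝ᵥ ψ + objR C D Q x w yy ξ - ψ ⬝ᵥ gfun gst ξ : ℝ) : EReal)) < (M : EReal) := by
        refine lt_of_le_of_lt ?_ hVM
        exact le_iSup₂ (f := fun ξb (_ : ξb ∈ Ξ) => ⨅ (yy : Fin Ny → ℝ)
          (_ : yy ∈ Yset ∧ ∀ ξ ∈ obsSet Ξ w ξb, consOK Tm Vm Wm H x w yy ξ),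
          ⨆ ξ ∈ obsSet Ξ w ξb,
            ((c ⬝ᵥ ψ + objR C D Q x w yy ξ - ψ ⬝ᵥ gfun gst ξ : ℝ) : EReal)) ξb hξb
      obtain ⟨yy, hyy⟩ := iInf_lt_iff.1 h1
      obtain ⟨hP, hlt'⟩ := iInf_lt_iff.1 hyy
      exact ⟨yy, hP, hlt'⟩
    choose! yy hyP hyM using key
    -- representative of each information class
    let rep0 : (Fin Nξ → ℝ) → (Fin Nξ → ℝ) := fun z =>
      if h : ∃ ξ', ξ' ∈ Ξ ∧ w * ξ' = z then h.choose else 0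
    have hrep : ∀ ξ ∈ Ξ, rep0 (w * ξ) ∈ Ξ ∧ w * (rep0 (w * ξ)) = w * ξ := by
      intro ξ hξ
      have h : ∃ ξ', ξ' ∈ Ξ ∧ w * ξ' = w * ξ := ⟨ξ, hξ, rfl⟩
      simp only [rep0, dif_pos h]
      exact h.choose_spec
    set yr : (Fin Nξ → ℝ) → (Fin Ny → ℝ) := fun ξ => yy (rep0 (w * ξ)) with hyr
    have hmemcls : ∀ ξ ∈ Ξ, ξ ∈ obsSet Ξ w (rep0 (w * ξ)) := by
      intro ξ hξ
      exact ⟨hξ, ((hrep ξ hξ).2).symm⟩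
    have hfeas : (⨆ ξ ∈ Ξ,
        ((c ⬝ᵥ ψ + objR C D Q x w (yr ξ) ξ - ψ ⬝ᵥ gfun gst ξ : ℝ) : EReal)) ∈
        {v : EReal |
          ∃ (ψ : Fin Ng → ℝ) (x : Fin Nx → ℝ) (w : Fin Nξ → ℝ)
            (y : (Fin Nξ → ℝ) → (Fin Ny → ℝ)),
            0 ≤ ψ ∧ x ∈ Xset ∧ w ∈ Wset ∧
            (∀ ξ ∈ Ξ, y ξ ∈ Yset) ∧
            (∀ ξ ∈ Ξ, ∀ ξ' ∈ Ξ, w * ξ = w * ξ' → y ξ = y ξ') ∧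
            (∀ ξ ∈ Ξ, consOK Tm Vm Wm H x w (y ξ) ξ) ∧
            v = ⨆ ξ ∈ Ξ,
              ((c ⬝ᵥ ψ + objR C D Q x w (y ξ) ξ - ψ ⬝ᵥ gfun gst ξ : ℝ) : EReal)} := by
      refine ⟨ψ, x, w, yr, hψ, hx, hw, ?_, ?_, ?_, rfl⟩
      · intro ξ hξ
        exact (hyP _ (hrep ξ hξ).1).1
      · intro ξ hξ ξ' hξ' heq
        simp only [hyr, heq]
      · intro ξ hξ
        exact (hyP _ (hrep ξ hξ).1).2 ξ (hmemcls ξ hξ)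
    have hub : (⨆ ξ ∈ Ξ,
        ((c ⬝ᵥ ψ + objR C D Q x w (yr ξ) ξ - ψ ⬝ᵥ gfun gst ξ : ℝ) : EReal)) ≤ (M : EReal) := by
      refine iSup₂_le fun ξ hξ => ?_
      refine le_trans ?_ (hyM _ (hrep ξ hξ).1).le
      exact le_iSup₂ (f := fun ξ' (_ : ξ' ∈ obsSet Ξ w (rep0 (w * ξ))) =>
        ((c ⬝ᵥ ψ + objR C D Q x w (yr ξ) ξ' - ψ ⬝ᵥ gfun gst ξ' : ℝ) : EReal)) ξ (hmemcls ξ hξ)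
    exact absurd (le_trans (sInf_le hfeas) hub) (not_le.2 hMs)
  · -- sInf RHS ≤ sInf LHS
    apply le_sInf
    rintro v ⟨ψ, x, w, y, hψ, hx, hw, hY, hNA, hC, rfl⟩
    refine sInf_le_of_le ⟨ψ, x, w, hψ, hx, hw, rfl⟩ ?_
    refine iSup₂_le fun ξb hξb => ?_
    have hP : y ξb ∈ Yset ∧ ∀ ξ ∈ obsSet Ξ w ξb, consOK Tm Vm Wm H x w (y ξb) ξ := by
      refine ⟨hY ξb hξb, fun ξ hξ => ?_⟩
      have he : y ξ = y ξb := hNA ξ hξ.1 ξb hξb hξ.2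
      have := hC ξ hξ.1
      rwa [he] at this
    refine le_trans (iInf₂_le (y ξb) hP) ?_
    refine iSup₂_le fun ξ hξ => ?_
    have he : y ξb = y ξ := (hNA ξ hξ.1 ξb hξb hξ.2).symm
    rw [he]
    exact le_iSup₂ (f := fun ξ (_ : ξ ∈ Ξ) =>
      ((c ⬝ᵥ ψ + objR C D Q x w (y ξ) ξ - ψ ⬝ᵥ gfun gst ξ : ℝ) : EReal)) ξ hξ.1


end
end

section
/- Let Ξ ⊆ ℝ^n be any nonempty set, w ∈ {0,1}^n, Y any set, F : ℝ^n × Y → ℝ ∪ {±∞} any function, and y' : Ξ → Y a non-anticipative decision rule, i.e., y'(ξ) = y'(ξ') whenever ξ, ξ' ∈ Ξ satisfy w ∘ ξ = w ∘ ξ'. Then sup_{ξ̄ ∈ Ξ} sup_{ξ ∈ Ξ(w, ξ̄)} F(ξ, y'(ξ̄)) = sup_{ξ ∈ Ξ} F(ξ, y'(ξ)). -/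
open Matrix

/-- for a non-anticipative decision rule `y'`,
`sup_{ξ̄ ∈ Ξ} sup_{ξ ∈ Ξ(w, ξ̄)} F(ξ, y'(ξ̄)) = sup_{ξ ∈ Ξ} F(ξ, y'(ξ))` in the extended reals. -/
theorem stmt4 {n : ℕ} (Ξ : Set (Fin n → ℝ)) (hΞne : Ξ.Nonempty)
    (w : Fin n → ℝ) (hw : ∀ i, w i = 0 ∨ w i = 1)
    (Y : Type) (F : (Fin n → ℝ) → Y → EReal)
    (y' : (Fin n → ℝ) → Y)
    (hna : ∀ ξ ∈ Ξ, ∀ ξ' ∈ Ξ, w * ξ = w * ξ' → y' ξ = y' ξ') :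
    (⨆ ξb ∈ Ξ, ⨆ ξ ∈ obsSet Ξ w ξb, F ξ (y' ξb)) = ⨆ ξ ∈ Ξ, F ξ (y' ξ) := by
  apply le_antisymm
  · refine iSup₂_le fun ξb hξb => iSup₂_le fun ξ hξ => ?_
    obtain ⟨hξΞ, hξeq⟩ := hξ
    rw [hna ξb hξb ξ hξΞ hξeq.symm]
    exact le_iSup₂ (f := fun ξ (_ : ξ ∈ Ξ) => F ξ (y' ξ)) ξ hξΞ
  · refine iSup₂_le fun ξ hξ => ?_
    calc F ξ (y' ξ) ≤ ⨆ ξ' ∈ obsSet Ξ w ξ, F ξ' (y' ξ) :=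
          le_iSup₂ (f := fun ξ' (_ : ξ' ∈ obsSet Ξ w ξ) => F ξ' (y' ξ)) ξ ⟨hξ, rfl⟩
      _ ≤ _ := le_iSup₂ (f := fun ξb (_ : ξb ∈ Ξ) => ⨆ ξ' ∈ obsSet Ξ w ξb, F ξ' (y' ξb)) ξ hξ
end

section
/- Let Ξ ⊆ ℝ^n be any nonempty set, w ∈ {0,1}^n, K a positive integer, and f_1, …, f_K : Ξ → ℝ ∪ {±∞} arbitrary functions. Then sup_{ξ̄ ∈ Ξ} min_{k=1..K} sup_{ξ ∈ Ξ(w, ξ̄)} f_k(ξ) = sup over tuples (ξ^1, …, ξ^K) ∈ Ξ^K(w) of min_{k=1..K} f_k(ξ^k), where Ξ^K(w) = {(ξ^1, …, ξ^K) ∈ Ξ^K : there exists ξ̄ ∈ Ξ with ξ^k ∈ Ξ(w, ξ̄) for all k = 1..K}. -/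
open Matrix

/-- The lifted uncertainty set
`Ξ^K(w) = {(ξ^1,…,ξ^K) ∈ Ξ^K : ∃ ξ̄ ∈ Ξ, ξ^k ∈ Ξ(w, ξ̄) for all k}`. -/
def liftedSet {n K : ℕ} (Ξ : Set (Fin n → ℝ)) (w : Fin n → ℝ) :
    Set (Fin K → Fin n → ℝ) :=
  {v | ∃ ξb ∈ Ξ, ∀ k, v k ∈ obsSet Ξ w ξb}

/-- the uncertainty-set lifting identity
`sup_{ξ̄ ∈ Ξ} min_{k} sup_{ξ ∈ Ξ(w, ξ̄)} f_k(ξ) = sup_{(ξ^1,…,ξ^K) ∈ Ξ^K(w)} min_k f_k(ξ^k)`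
in the extended reals. -/
theorem stmt5 {n K : ℕ} (hK : 0 < K)
    (Ξ : Set (Fin n → ℝ)) (hΞne : Ξ.Nonempty)
    (w : Fin n → ℝ) (hw : ∀ i, w i = 0 ∨ w i = 1)
    (f : Fin K → (Fin n → ℝ) → EReal) :
    (⨆ ξb ∈ Ξ, ⨅ k : Fin K, ⨆ ξ ∈ obsSet Ξ w ξb, f k ξ)
      = ⨆ v ∈ liftedSet (K := K) Ξ w, ⨅ k : Fin K, f k (v k) := by
  apply le_antisymm
  · refine iSup₂_le fun ξb hξb => ?_
    refine le_of_forall_lt fun b hb => ?_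
    have hchoice : ∀ k : Fin K, ∃ ξ ∈ obsSet Ξ w ξb, b < f k ξ := by
      intro k
      have h1 : b < ⨆ ξ ∈ obsSet Ξ w ξb, f k ξ := lt_of_lt_of_le hb (iInf_le _ k)
      simpa [lt_iSup_iff] using h1
    choose v hv hbv using hchoice
    have hmem : v ∈ liftedSet (K := K) Ξ w := ⟨ξb, hξb, fun k => hv k⟩
    haveI : Nonempty (Fin K) := ⟨⟨0, hK⟩⟩
    obtain ⟨k0, hk0⟩ := Finite.exists_min fun k => f k (v k)
    have hlt : b < ⨅ k, f k (v k) := lt_of_lt_of_le (hbv k0) (le_iInf hk0)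
    exact lt_of_lt_of_le hlt
      (le_iSup₂ (f := fun v _ => ⨅ k, f k (v k)) v hmem)
  · refine iSup₂_le fun v hv => ?_
    obtain ⟨ξb, hξb, hvk⟩ := hv
    refine le_trans ?_
      (le_iSup₂ (f := fun ξb _ => ⨅ k : Fin K, ⨆ ξ ∈ obsSet Ξ w ξb, f k ξ) ξb hξb)
    exact le_iInf fun k => le_trans (iInf_le _ k)
      (le_iSup₂ (f := fun ξ _ => f k ξ) (v k) (hvk k))
end

section
/- Fix w' ∈ {0,1}^{Nξ}. The value Φ(w') = inf over ψ ∈ ℝ^{Ng} with ψ ≥ 0, x ∈ X, y^k ∈ Y (k = 1..K) of cᵀψ + sup_{ξ̄ ∈ Ξ} min_{k=1..K} { sup_{ξ ∈ Ξ(w', ξ̄)} ( ξᵀC x + ξᵀD w' + ξᵀQ y^k − ψᵀ g(ξ) ) subject to T(ξ)x + V(ξ)w' + W(ξ)y^k ≤ Hξ for all ξ ∈ Ξ(w', ξ̄), the k-th inner value being +∞ if this robust feasibility fails } equals the optimal value of the disjunctive problem: inf over θ ∈ ℝ, ψ ∈ ℝ^{Ng} with ψ ≥ 0, x ∈ X,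 y^k ∈ Y (k = 1..K), and sets Ξ^1, …, Ξ^K ⊆ ℝ^{Nξ} with ∪_{k=1..K} Ξ^k = Ξ, of θ, subject to, for every k = 1..K and every ξ̄ ∈ Ξ^k: θ ≥ cᵀψ + sup_{ξ ∈ Ξ(w', ξ̄)} ( ξᵀC x + ξᵀD w' + ξᵀQ y^k − ψᵀ g(ξ) ) and T(ξ)x + V(ξ)w' + W(ξ)y^k ≤ Hξ for all ξ ∈ Ξ(w', ξ̄). -/
/-!
Fix the first-stage decisions `ψ, x, y`. Since `K` is finite and infeasibility of policy `k` is
encoded by the value `⊤`, the bound `cᵀψ + sup_{ξ̄} min_k (⋯) ≤ θ` for a real `θ` holds exactly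
when every `ξ̄ ∈ Ξ` has a policy `k` that is robustly feasible on `Ξ(w', ξ̄)` with cost at most
`θ`, i.e. when the sets `Ξ^k` of such `ξ̄` cover `Ξ`. The disjunctive problem therefore minimises
over the real upper bounds of the values `Φ` minimises over, and both infima agree in `EReal`.
-/

open Matrix

noncomputable section

/-- The `l`-th uncertain constraint row `[T(ξ)x + V(ξ)w + W(ξ)y]_l`. -/
def rowLHS {Nξ Nx Ny L : ℕ} (Tm : Fin L → Matrix (Fin Nξ) (Fin Nx) ℝ)
    (Vm : Fin L → Matrix (Fin Nξ) (Fin Nξ) ℝ) (Wm : Fin L → Matrix (Fin Nξ) (Fin Ny) ℝ)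
    (x : Fin Nx → ℝ) (w : Fin Nξ → ℝ) (y : Fin Ny → ℝ) (ξ : Fin Nξ → ℝ) (l : Fin L) : ℝ :=
  ξ ⬝ᵥ (Tm l).mulVec x + ξ ⬝ᵥ (Vm l).mulVec w + ξ ⬝ᵥ (Wm l).mulVec y

theorem iSup_iInf_le_iff_exists_cover {ι β α : Type*} [Fintype ι] [CompleteLinearOrder α]
    {s : Set β} {P : ι → β → Prop} {f : ι → β → α} {a : α} (ha : a < ⊤) :
    (⨆ b ∈ s, ⨅ (i : ι) (_ : P i b), f i b) ≤ a ↔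
      ∃ t : ι → Set β, (⋃ i, t i) = s ∧ ∀ i, ∀ b ∈ t i, f i b ≤ a ∧ P i b := by
  constructor
  · intro h
    refine ⟨fun i => {b ∈ s | f i b ≤ a ∧ P i b}, ?_, fun i b hb => hb.2⟩
    refine (Set.iUnion_subset fun i b hb => hb.1).antisymm fun b hb => ?_
    have hinf : (Finset.univ.inf fun i => ⨅ (_ : P i b), f i b) ≤ a := by
      rw [Finset.inf_univ_eq_iInf]
      exact (le_iSup₂ (f := fun b (_ : b ∈ s) => ⨅ (i : ι) (_ : P i b), f i b) b hb).trans h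
    obtain ⟨i, -, hi⟩ := (Finset.inf_le_iff ha).1 hinf
    have hPi : P i b := by
      by_contra hP
      rw [iInf_neg hP] at hi
      exact (hi.trans_lt ha).false
    rw [iInf_pos hPi] at hi
    exact Set.mem_iUnion.2 ⟨i, hb, hi, hPi⟩
  · rintro ⟨t, rfl, ht⟩
    refine iSup₂_le fun b hb => ?_
    obtain ⟨i, hi⟩ := Set.mem_iUnion.1 hb
    obtain ⟨hfi, hPi⟩ := ht i b hi
    exact (iInf₂_le i hPi).trans hfi

theorem EReal.add_iSup_iInf_le_iff_exists_cover {ι β : Type*} [Fintype ι] {s : Set β}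
    {P : ι → β → Prop} {f : ι → β → EReal} (r θ : ℝ) :
    (r : EReal) + (⨆ b ∈ s, ⨅ (i : ι) (_ : P i b), f i b) ≤ θ ↔
      ∃ t : ι → Set β, (⋃ i, t i) = s ∧ ∀ i, ∀ b ∈ t i, (r : EReal) + f i b ≤ θ ∧ P i b := by
  have shift : ∀ x : EReal, (r : EReal) + x ≤ θ ↔ x ≤ (θ : EReal) - r := fun x => by
    rw [add_comm, EReal.le_sub_iff_add_le (.inl (EReal.coe_ne_bot r))
      (.inl (EReal.coe_ne_top r))]
  simp only [shift]
  exact iSup_iInf_le_iff_exists_cover (by simp [← EReal.coe_sub])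

theorem EReal.sInf_setOf_coe_ge_eq_sInf (S : Set EReal) :
    sInf {v : EReal | ∃ θ : ℝ, (∃ s ∈ S, s ≤ θ) ∧ v = θ} = sInf S := by
  refine le_antisymm (le_sInf fun s hs => ?_) (le_sInf ?_)
  · induction s using EReal.rec with
    | bot =>
      refine le_bot_iff.2 ((EReal.eq_bot_iff_forall_lt _).2 fun y => ?_)
      calc sInf {v : EReal | ∃ θ : ℝ, (∃ s ∈ S, s ≤ θ) ∧ v = θ} ≤ ((y - 1 : ℝ) : EReal) :=
            sInf_le ⟨y - 1, ⟨⊥, hs, bot_le⟩, rfl⟩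
        _ < y := EReal.coe_lt_coe_iff.2 (sub_one_lt y)
    | coe u => exact sInf_le ⟨u, ⟨u, hs, le_rfl⟩, rfl⟩
    | top => exact le_top
  · rintro _ ⟨θ, ⟨s, hs, hsθ⟩, rfl⟩
    exact (sInf_le hs).trans hsθ

theorem stmt8_general (Nξ Nx Ny Ng L T K : ℕ)
    (Ξ : Set (Fin Nξ → ℝ))
    (Xset : Set (Fin Nx → ℝ)) (Yset : Set (Fin Ny → ℝ))
    (C : Matrix (Fin Nξ) (Fin Nx) ℝ) (D : Matrix (Fin Nξ) (Fin Nξ) ℝ)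
    (Q : Matrix (Fin Nξ) (Fin Ny) ℝ) (H : Matrix (Fin L) (Fin Nξ) ℝ)
    (Tm : Fin L → Matrix (Fin Nξ) (Fin Nx) ℝ)
    (Vm : Fin L → Matrix (Fin Nξ) (Fin Nξ) ℝ)
    (Wm : Fin L → Matrix (Fin Nξ) (Fin Ny) ℝ)
    (gst : Fin Ng → Fin T → (Fin Nξ → ℝ)) (c : Fin Ng → ℝ)
    (w' : Fin Nξ → ℝ) :
    -- Φ(w')
    sInf {v : EReal |
      ∃ (ψ : Fin Ng → ℝ) (x : Fin Nx → ℝ) (y : Fin K → Fin Ny → ℝ),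
        0 ≤ ψ ∧ x ∈ Xset ∧ (∀ k, y k ∈ Yset) ∧
        v = ((c ⬝ᵥ ψ : ℝ) : EReal) +
          ⨆ ξb ∈ Ξ, ⨅ (k : Fin K)
              (_ : ∀ ξ ∈ obsSet Ξ w' ξb, ∀ l,
                rowLHS Tm Vm Wm x w' (y k) ξ l ≤ H.mulVec ξ l),
            ⨆ ξ ∈ obsSet Ξ w' ξb,
              ((ξ ⬝ᵥ C.mulVec x + ξ ⬝ᵥ D.mulVec w' + ξ ⬝ᵥ Q.mulVec (y k)
                - ψ ⬝ᵥ gfun gst ξ : ℝ) : EReal)}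
    =
    -- value of the disjunctive problem
    sInf {v : EReal |
      ∃ (θ : ℝ) (ψ : Fin Ng → ℝ) (x : Fin Nx → ℝ) (y : Fin K → Fin Ny → ℝ)
        (Ξk : Fin K → Set (Fin Nξ → ℝ)),
        0 ≤ ψ ∧ x ∈ Xset ∧ (∀ k, y k ∈ Yset) ∧
        (⋃ k, Ξk k) = Ξ ∧
        (∀ k, ∀ ξb ∈ Ξk k,
          (((c ⬝ᵥ ψ : ℝ) : EReal) +
            ⨆ ξ ∈ obsSet Ξ w' ξb,
              ((ξ ⬝ᵥ C.mulVec x + ξ ⬝ᵥ D.mulVec w' + ξ ⬝ᵥ Q.mulVec (y k)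
                - ψ ⬝ᵥ gfun gst ξ : ℝ) : EReal)) ≤ ((θ : ℝ) : EReal) ∧
          (∀ ξ ∈ obsSet Ξ w' ξb, ∀ l,
            rowLHS Tm Vm Wm x w' (y k) ξ l ≤ H.mulVec ξ l)) ∧
        v = ((θ : ℝ) : EReal)} := by
  refine (Eq.trans ?_ (EReal.sInf_setOf_coe_ge_eq_sInf _)).symm
  congr 1
  ext v
  constructor
  · rintro ⟨θ, ψ, x, y, Ξk, hψ, hx, hy, hcover, hcon, rfl⟩
    exact ⟨θ, ⟨_, ⟨ψ, x, y, hψ, hx, hy, rfl⟩,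
      (EReal.add_iSup_iInf_le_iff_exists_cover _ θ).2 ⟨Ξk, hcover, hcon⟩⟩, rfl⟩
  · rintro ⟨θ, ⟨_, ⟨ψ, x, y, hψ, hx, hy, rfl⟩, hθ⟩, rfl⟩
    obtain ⟨Ξk, hcover, hcon⟩ := (EReal.add_iSup_iInf_le_iff_exists_cover _ θ).1 hθ
    exact ⟨θ, ψ, x, y, Ξk, hψ, hx, hy, hcover, hcon, rfl⟩

/-- Proposition 1: for fixed measurement decision `w'`, the value `Φ(w')` of
the K-adaptability problem equals the optimal value of the disjunctive reformulation in which
the partition sets `Ξ^1, …, Ξ^K` covering `Ξ` are decision variables. -/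
theorem stmt8 (Nξ Nx Ny Ng L R T K : ℕ) (hT : 0 < T) (hK : 0 < K)
    (A : Matrix (Fin R) (Fin Nξ) ℝ) (b : Fin R → ℝ)
    (Ξ : Set (Fin Nξ → ℝ)) (hΞ : Ξ = {ξ | A.mulVec ξ ≤ b})
    (hΞne : Ξ.Nonempty) (hΞbdd : Bornology.IsBounded Ξ)
    (Xset : Set (Fin Nx → ℝ)) (Yset : Set (Fin Ny → ℝ))
    (C : Matrix (Fin Nξ) (Fin Nx) ℝ) (D : Matrix (Fin Nξ) (Fin Nξ) ℝ)
    (Q : Matrix (Fin Nξ) (Fin Ny) ℝ) (H : Matrix (Fin L) (Fin Nξ) ℝ)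
    (Tm : Fin L → Matrix (Fin Nξ) (Fin Nx) ℝ)
    (Vm : Fin L → Matrix (Fin Nξ) (Fin Nξ) ℝ)
    (Wm : Fin L → Matrix (Fin Nξ) (Fin Ny) ℝ)
    (gst : Fin Ng → Fin T → (Fin Nξ → ℝ)) (c : Fin Ng → ℝ)
    (w' : Fin Nξ → ℝ) (hw' : ∀ i, w' i = 0 ∨ w' i = 1) :
    -- Φ(w')
    sInf {v : EReal |
      ∃ (ψ : Fin Ng → ℝ) (x : Fin Nx → ℝ) (y : Fin K → Fin Ny → ℝ),
        0 ≤ ψ ∧ x ∈ Xset ∧ (∀ k, y k ∈ Yset) ∧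
        v = ((c ⬝ᵥ ψ : ℝ) : EReal) +
          ⨆ ξb ∈ Ξ, ⨅ (k : Fin K)
              (_ : ∀ ξ ∈ obsSet Ξ w' ξb, ∀ l,
                rowLHS Tm Vm Wm x w' (y k) ξ l ≤ H.mulVec ξ l),
            ⨆ ξ ∈ obsSet Ξ w' ξb,
              ((ξ ⬝ᵥ C.mulVec x + ξ ⬝ᵥ D.mulVec w' + ξ ⬝ᵥ Q.mulVec (y k)
                - ψ ⬝ᵥ gfun gst ξ : ℝ) : EReal)}
    =
    -- value of the disjunctive problem
    sInf {v : EReal |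
      ∃ (θ : ℝ) (ψ : Fin Ng → ℝ) (x : Fin Nx → ℝ) (y : Fin K → Fin Ny → ℝ)
        (Ξk : Fin K → Set (Fin Nξ → ℝ)),
        0 ≤ ψ ∧ x ∈ Xset ∧ (∀ k, y k ∈ Yset) ∧
        (⋃ k, Ξk k) = Ξ ∧
        (∀ k, ∀ ξb ∈ Ξk k,
          (((c ⬝ᵥ ψ : ℝ) : EReal) +
            ⨆ ξ ∈ obsSet Ξ w' ξb,
              ((ξ ⬝ᵥ C.mulVec x + ξ ⬝ᵥ D.mulVec w' + ξ ⬝ᵥ Q.mulVec (y k)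
                - ψ ⬝ᵥ gfun gst ξ : ℝ) : EReal)) ≤ ((θ : ℝ) : EReal) ∧
          (∀ ξ ∈ obsSet Ξ w' ξb, ∀ l,
            rowLHS Tm Vm Wm x w' (y k) ξ l ≤ H.mulVec ξ l)) ∧
        v = ((θ : ℝ) : EReal)} :=
  stmt8_general Nξ Nx Ny Ng L T K Ξ Xset Yset C D Q H Tm Vm Wm gst c w'

end
end

section
/- Fix w' ∈ {0,1}^{Nξ}, and fix θ' ∈ ℝ, ψ' ∈ ℝ^{Ng} with ψ' ≥ 0, x' ∈ X, and y^{k'} ∈ Y for k = 1..K. Then the value z = sup_{ξ̄ ∈ Ξ} min_{k=1..K} sup_{ξ ∈ Ξ(w', ξ̄)} max{ cᵀψ' + ξᵀC x' + ξᵀD w' + ξᵀQ y^{k'} − ψ'ᵀ g(ξ) − θ', max_{l=1..L} ( [T(ξ)x' + V(ξ)w' + W(ξ)y^{k'}]_l − [Hξ]_l ) } equals the optimal value of the mixed-integer program: sup of z over z ∈ ℝ, ξ̄ ∈ ℝ^{Nξ}, ξ^k ∈ ℝ^{Nξ} (k = 1..K), and binary variables z_{kl} ∈ {0,1} for k = 1..K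 and l = 0, 1, …, L, subject to: A ξ̄ ≤ b; and for each k = 1..K: A ξ^k ≤ b, w' ∘ ξ^k = w' ∘ ξ̄, Σ_{l=0}^{L} z_{kl} = 1, z_{k0} = 1 implies z ≤ cᵀψ' + ξ^kᵀC x' + ξ^kᵀD w' + ξ^kᵀQ y^{k'} − ψ'ᵀ g(ξ^k) − θ', and for each l = 1..L, z_{kl} = 1 implies z ≤ [T(ξ^k)x' + V(ξ^k)w' + W(ξ^k)y^{k'}]_l − [Hξ^k]_l. -/
open Matrix

noncomputable section

/-- Theorem A.3: the separation problem equals its mixed-integer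
reformulation, in which the binary selector `z_{kl}` (with `Σ_{l=0}^L z_{kl} = 1`) is
indexed by `Option (Fin L)`: `none` encodes `l = 0` (the objective piece) and `some l`
encodes the `l`-th uncertain constraint. -/
theorem stmt9 (Nξ Nx Ny Ng L R T K : ℕ) (hT : 0 < T) (hK : 0 < K)
    (A : Matrix (Fin R) (Fin Nξ) ℝ) (b : Fin R → ℝ)
    (Ξ : Set (Fin Nξ → ℝ)) (hΞ : Ξ = {ξ | A.mulVec ξ ≤ b})
    (hΞne : Ξ.Nonempty) (hΞbdd : Bornology.IsBounded Ξ)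
    (Xset : Set (Fin Nx → ℝ)) (Yset : Set (Fin Ny → ℝ))
    (C : Matrix (Fin Nξ) (Fin Nx) ℝ) (D : Matrix (Fin Nξ) (Fin Nξ) ℝ)
    (Q : Matrix (Fin Nξ) (Fin Ny) ℝ) (H : Matrix (Fin L) (Fin Nξ) ℝ)
    (Tm : Fin L → Matrix (Fin Nξ) (Fin Nx) ℝ)
    (Vm : Fin L → Matrix (Fin Nξ) (Fin Nξ) ℝ)
    (Wm : Fin L → Matrix (Fin Nξ) (Fin Ny) ℝ)
    (gst : Fin Ng → Fin T → (Fin Nξ → ℝ)) (c : Fin Ng → ℝ)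
    (w' : Fin Nξ → ℝ) (hw' : ∀ i, w' i = 0 ∨ w' i = 1)
    (θ' : ℝ) (ψ' : Fin Ng → ℝ) (hψ' : 0 ≤ ψ')
    (x' : Fin Nx → ℝ) (hx' : x' ∈ Xset)
    (y' : Fin K → Fin Ny → ℝ) (hy' : ∀ k, y' k ∈ Yset) :
    -- the separation value z
    (⨆ ξb ∈ Ξ, ⨅ k : Fin K, ⨆ ξ ∈ obsSet Ξ w' ξb,
      max
        ((c ⬝ᵥ ψ' + ξ ⬝ᵥ C.mulVec x' + ξ ⬝ᵥ D.mulVec w' + ξ ⬝ᵥ Q.mulVec (y' k)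
          - ψ' ⬝ᵥ gfun gst ξ - θ' : ℝ) : EReal)
        (⨆ l : Fin L, ((rowLHS Tm Vm Wm x' w' (y' k) ξ l - H.mulVec ξ l : ℝ) : EReal)))
    =
    -- the optimal value of the mixed-integer reformulation
    sSup {v : EReal |
      ∃ (z : ℝ) (ξb : Fin Nξ → ℝ) (ξk : Fin K → Fin Nξ → ℝ)
        (zb : Fin K → Option (Fin L) → ℝ),
        (∀ k o, zb k o = 0 ∨ zb k o = 1) ∧
        A.mulVec ξb ≤ b ∧
        (∀ k, A.mulVec (ξk k) ≤ b) ∧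
        (∀ k, w' * ξk k = w' * ξb) ∧
        (∀ k, (∑ o : Option (Fin L), zb k o) = 1) ∧
        (∀ k, zb k none = 1 →
          z ≤ c ⬝ᵥ ψ' + ξk k ⬝ᵥ C.mulVec x' + ξk k ⬝ᵥ D.mulVec w'
            + ξk k ⬝ᵥ Q.mulVec (y' k) - ψ' ⬝ᵥ gfun gst (ξk k) - θ') ∧
        (∀ k l, zb k (some l) = 1 →
          z ≤ rowLHS Tm Vm Wm x' w' (y' k) (ξk k) l - H.mulVec (ξk k) l) ∧
        v = ((z : ℝ) : EReal)} := by
  set f : Fin K → (Fin Nξ → ℝ) → ℝ := fun k ξ =>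
    c ⬝ᵥ ψ' + ξ ⬝ᵥ C.mulVec x' + ξ ⬝ᵥ D.mulVec w' + ξ ⬝ᵥ Q.mulVec (y' k)
      - ψ' ⬝ᵥ gfun gst ξ - θ' with hf
  set g : Fin K → Fin L → (Fin Nξ → ℝ) → ℝ := fun k l ξ =>
    rowLHS Tm Vm Wm x' w' (y' k) ξ l - H.mulVec ξ l with hg
  set S : Set EReal := {v : EReal |
      ∃ (z : ℝ) (ξb : Fin Nξ → ℝ) (ξk : Fin K → Fin Nξ → ℝ)
        (zb : Fin K → Option (Fin L) → ℝ),
        (∀ k o, zb k o = 0 ∨ zb k o = 1) ∧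
        A.mulVec ξb ≤ b ∧
        (∀ k, A.mulVec (ξk k) ≤ b) ∧
        (∀ k, w' * ξk k = w' * ξb) ∧
        (∀ k, (∑ o : Option (Fin L), zb k o) = 1) ∧
        (∀ k, zb k none = 1 → z ≤ f k (ξk k)) ∧
        (∀ k l, zb k (some l) = 1 → z ≤ g k l (ξk k)) ∧
        v = ((z : ℝ) : EReal)} with hS
  show (⨆ ξb ∈ Ξ, ⨅ k : Fin K, ⨆ ξ ∈ obsSet Ξ w' ξb,
      max ((f k ξ : ℝ) : EReal) (⨆ l : Fin L, ((g k l ξ : ℝ) : EReal))) = sSup S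
  apply le_antisymm
  · -- LHS ≤ RHS
    by_contra hlt
    push_neg at hlt
    obtain ⟨q, hq1, hq2⟩ := EReal.exists_between_coe_real hlt
    rw [lt_iSup_iff] at hq2
    obtain ⟨ξb, hq2⟩ := hq2
    rw [lt_iSup_iff] at hq2
    obtain ⟨hξb, hq2⟩ := hq2
    -- for each k, extract a point and a piece
    have hk : ∀ k : Fin K, ∃ ξ, ξ ∈ obsSet Ξ w' ξb ∧
        (q ≤ f k ξ ∨ ∃ l, q ≤ g k l ξ) := by
      intro k
      have h1 : (q : EReal) < ⨆ ξ ∈ obsSet Ξ w' ξb,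
          max ((f k ξ : ℝ) : EReal) (⨆ l : Fin L, ((g k l ξ : ℝ) : EReal)) :=
        lt_of_lt_of_le hq2 (iInf_le _ k)
      rw [lt_iSup_iff] at h1
      obtain ⟨ξ, h1⟩ := h1
      rw [lt_iSup_iff] at h1
      obtain ⟨hξ, h1⟩ := h1
      refine ⟨ξ, hξ, ?_⟩
      rcases lt_max_iff.1 h1 with h | h
      · exact Or.inl (le_of_lt (EReal.coe_lt_coe_iff.1 h))
      · rw [lt_iSup_iff] at h
        obtain ⟨l, hl⟩ := h
        exact Or.inr ⟨l, le_of_lt (EReal.coe_lt_coe_iff.1 hl)⟩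
    choose ξk hξk hpiece using hk
    -- choose the selector
    have hchoice : ∀ k : Fin K, ∃ o : Option (Fin L),
        (o = none → q ≤ f k (ξk k)) ∧ (∀ l, o = some l → q ≤ g k l (ξk k)) := by
      intro k
      rcases hpiece k with h | ⟨l, hl⟩
      · exact ⟨none, fun _ => h, fun l hl => by simp at hl⟩
      · exact ⟨some l, fun h => by simp at h, fun l' hl' => by
          rw [Option.some_inj] at hl'; rw [← hl']; exact hl⟩
    choose oc hoc1 hoc2 using hchoice
    have hmem : ((q : ℝ) : EReal) ∈ S := by
      refine ⟨q, ξb, ξk, fun k o => if o = oc k then 1 else 0, ?_, ?_, ?_, ?_, ?_, ?_, ?_, rfl⟩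
      · intro k o; by_cases h : o = oc k <;> simp [h]
      · rw [hΞ] at hξb; exact hξb
      · intro k; have := (hξk k).1; rw [hΞ] at this; exact this
      · intro k; exact (hξk k).2
      · intro k; simp
      · intro k h
        by_cases hn : (none : Option (Fin L)) = oc k
        · exact hoc1 k hn.symm
        · simp [hn] at h
      · intro k l h
        by_cases hn : (some l : Option (Fin L)) = oc k
        · exact hoc2 k l hn.symm
        · simp [hn] at h
    exact absurd (le_sSup hmem) (not_le.2 hq1)
  · -- RHS ≤ LHS
    apply sSup_le
    rintro v ⟨z, ξb, ξk, zb, hzb01, hξb, hξkA, hξkw, hsum, hnone, hsome, rfl⟩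
    have hξbΞ : ξb ∈ Ξ := by rw [hΞ]; exact hξb
    refine le_trans ?_ (le_iSup₂_of_le ξb hξbΞ le_rfl)
    apply le_iInf
    intro k
    have hmem : ξk k ∈ obsSet Ξ w' ξb := ⟨by rw [hΞ]; exact hξkA k, hξkw k⟩
    refine le_trans ?_ (le_iSup₂_of_le (ξk k) hmem le_rfl)
    -- there exists o with zb k o = 1
    have hex : ∃ o, zb k o = 1 := by
      by_contra h
      push_neg at h
      have : (∑ o : Option (Fin L), zb k o) = 0 :=
        Finset.sum_eq_zero fun o _ => (hzb01 k o).resolve_right (h o)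
      rw [hsum k] at this; exact one_ne_zero this
    obtain ⟨o, ho⟩ := hex
    cases o with
    | none =>
        exact le_max_of_le_left (EReal.coe_le_coe_iff.2 (hnone k ho))
    | some l =>
        refine le_max_of_le_right ?_
        exact le_trans (EReal.coe_le_coe_iff.2 (hsome k l ho)) (le_iSup (fun l => ((g k l (ξk k) : ℝ) : EReal)) l)


end
end

section
/- Let Ξ ⊆ ℝ^{Nξ} be nonempty, let V(ξ) ∈ ℝ^{L×n} be a matrix-valued function of ξ that is componentwise nonnegative for every ξ ∈ Ξ, and let H ∈ ℝ^{L×Nξ}. Suppose w^r ∈ {0,1}^n violates the robust constraint V(ξ)w ≤ Hξ for all ξ ∈ Ξ, i.e., there exist ξ ∈ Ξ and a row index l with [V(ξ)w^r]_l > [Hξ]_l. Then every w ∈ {0,1}^n with w ≥ w^r componentwise also violates the robust constraint; consequently every w ∈ {0,1}^n satisfying the robust constraint satisfies the strengthened feasibility cut Σ_{i ∈ I_r} (1 − w_i) ≥ 1, where I_r = {i : w^r_i = 1}. -/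
open Matrix

/-- if `V(ξ)` is componentwise nonnegative on `Ξ` and `w^r` violates the
robust constraint `V(ξ)w ≤ Hξ ∀ ξ ∈ Ξ`, then every binary `w ≥ w^r` also violates it;
consequently every binary `w` satisfying the robust constraint satisfies the strengthened
feasibility cut `Σ_{i ∈ I_r} (1 − w_i) ≥ 1`. -/
theorem stmt15 (Nξ n L : ℕ)
    (Ξ : Set (Fin Nξ → ℝ)) (hΞne : Ξ.Nonempty)
    (Vf : (Fin Nξ → ℝ) → Matrix (Fin L) (Fin n) ℝ)
    (hVf : ∀ ξ ∈ Ξ, ∀ l i, 0 ≤ Vf ξ l i)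
    (H : Matrix (Fin L) (Fin Nξ) ℝ)
    (wr : Fin n → ℝ) (hwr : ∀ i, wr i = 0 ∨ wr i = 1)
    (hviol : ∃ ξ ∈ Ξ, ∃ l, H.mulVec ξ l < (Vf ξ).mulVec wr l)
    (Ir : Finset (Fin n)) (hIr : Ir = Finset.univ.filter (fun i => wr i = 1)) :
    (∀ w : Fin n → ℝ, (∀ i, w i = 0 ∨ w i = 1) → wr ≤ w →
      ∃ ξ ∈ Ξ, ∃ l, H.mulVec ξ l < (Vf ξ).mulVec w l)
    ∧
    (∀ w : Fin n → ℝ, (∀ i, w i = 0 ∨ w i = 1) →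
      (∀ ξ ∈ Ξ, (Vf ξ).mulVec w ≤ H.mulVec ξ) →
      1 ≤ ∑ i ∈ Ir, (1 - w i)) := by
  obtain ⟨ξ0, hξ0, l0, hl0⟩ := hviol
  have key : ∀ w : Fin n → ℝ, (∀ i, w i = 0 ∨ w i = 1) → wr ≤ w →
      ∃ ξ ∈ Ξ, ∃ l, H.mulVec ξ l < (Vf ξ).mulVec w l := by
    intro w hw hle
    refine ⟨ξ0, hξ0, l0, lt_of_lt_of_le hl0 ?_⟩
    unfold Matrix.mulVec dotProduct
    exact Finset.sum_le_sum fun i _ =>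
      mul_le_mul_of_nonneg_left (hle i) (hVf ξ0 hξ0 l0 i)
  refine ⟨key, fun w hw hfeas => ?_⟩
  by_contra hcon
  push_neg at hcon
  have hnle : ¬ wr ≤ w := by
    intro hle
    obtain ⟨ξ, hξ, l, hl⟩ := key w hw hle
    exact absurd (hfeas ξ hξ l) (not_le_of_gt hl)
  rw [Pi.le_def] at hnle
  push_neg at hnle
  obtain ⟨i, hi⟩ := hnle
  have hwr1 : wr i = 1 := by rcases hwr i with h | h <;> rcases hw i with h' | h' <;> simp [h, h'] at hi ⊢ <;> linarith
  have hwi0 : w i = 0 := by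
    rcases hw i with h' | h'
    · exact h'
    · rw [hwr1, h'] at hi; linarith
  have hiIr : i ∈ Ir := by rw [hIr]; simp [hwr1]
  have : (1 : ℝ) = 1 - w i := by rw [hwi0]; ring
  have hsum : ∑ j ∈ Ir, (1 - w j) ≥ 1 - w i := by
    refine Finset.single_le_sum (f := fun j => 1 - w j) (fun j hj => ?_) hiIr
    rcases hw j with h | h <;> simp [h]
  linarith
end

section
/- Let Φ : {0,1}^n → ℝ ∪ {+∞} satisfy (i) Φ(w) ≥ L for all w ∈ {0,1}^n for some L ∈ ℝ, and (ii) the information monotonicity property: Φ(w) ≥ Φ(w') whenever w ≤ w' componentwise. Let w' ∈ {0,1}^n with Φ(w') < +∞ and I = {i : w'_i = 1}. Then the strengthened optimality cut is valid: for every w ∈ {0,1}^n, Φ(w) ≥ Φ(w') − (Φ(w') − L) Σ_{i ∉ I} w_i. -/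
/-- validity of the strengthened optimality cut for a value function `Φ` that
is bounded below by `L` on binary points and monotone with respect to information
(`w ≤ w'` componentwise implies `Φ(w) ≥ Φ(w')`), where `Φ(w') = φ' < +∞` and
`I = {i : w'_i = 1}`. -/
theorem stmt17 (n : ℕ) (Φ : (Fin n → ℝ) → EReal) (L : ℝ)
    (hL : ∀ w : Fin n → ℝ, (∀ i, w i = 0 ∨ w i = 1) → ((L : ℝ) : EReal) ≤ Φ w)
    (hmono : ∀ w w' : Fin n → ℝ, (∀ i, w i = 0 ∨ w i = 1) → (∀ i, w' i = 0 ∨ w' i = 1) →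
      w ≤ w' → Φ w' ≤ Φ w)
    (w' : Fin n → ℝ) (hw' : ∀ i, w' i = 0 ∨ w' i = 1)
    (φ' : ℝ) (hφ' : Φ w' = ((φ' : ℝ) : EReal))
    (I : Finset (Fin n)) (hI : I = Finset.univ.filter (fun i => w' i = 1)) :
    ∀ w : Fin n → ℝ, (∀ i, w i = 0 ∨ w i = 1) →
      (((φ' - (φ' - L) * ∑ i ∈ Iᶜ, w i : ℝ)) : EReal) ≤ Φ w := by
  intro w hw
  have hLφ : L ≤ φ' := by
    have := hL w' hw'
    rw [hφ'] at this
    exact_mod_cast this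
  by_cases h0 : ∀ i ∈ Iᶜ, w i = 0
  · have hsum : ∑ i ∈ Iᶜ, w i = 0 := Finset.sum_eq_zero h0
    rw [hsum]
    simp only [mul_zero, sub_zero]
    rw [← hφ']
    apply hmono w w' hw hw'
    intro i
    by_cases hi : i ∈ I
    · rw [hI] at hi
      simp only [Finset.mem_filter, Finset.mem_univ, true_and] at hi
      rcases hw i with h | h <;> rw [hi, h] <;> norm_num
    · have hwi := h0 i (Finset.mem_compl.mpr hi)
      rw [hwi]
      rcases hw' i with h | h <;> rw [h] <;> norm_num
  · push_neg at h0
    obtain ⟨j, hj, hjw⟩ := h0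
    have hj1 : w j = 1 := (hw j).resolve_left hjw
    have hS : 1 ≤ ∑ i ∈ Iᶜ, w i := by
      have h := Finset.single_le_sum (f := w)
        (fun i _ => (hw i).elim (fun h => by rw [h]) (fun h => by rw [h]; norm_num)) hj
      linarith [h]
    have hRL : φ' - (φ' - L) * ∑ i ∈ Iᶜ, w i ≤ L := by nlinarith
    calc ((φ' - (φ' - L) * ∑ i ∈ Iᶜ, w i : ℝ) : EReal) ≤ ((L : ℝ) : EReal) := by
          exact_mod_cast hRL
      _ ≤ Φ w := hL w hw
end

section
/- Fix w^r ∈ {0,1}^{Nξ} and a finite set Ξ̂ ⊆ Ξ, and let v denote the optimal value of the relaxed linear program: inf over θ ∈ ℝ, ψ ∈ ℝ^{Ng} with ψ ≥ 0, x ∈ X^{LP}, w, and y(ξ) ∈ Y^{LP} for ξ ∈ Ξ̂, subject to w = w^r and, for every ξ ∈ Ξ̂: θ ≥ cᵀψ + ξᵀC x + ξᵀD w + ξᵀQ y(ξ) − ψᵀ g(ξ) and T(ξ)x + V(ξ)w + W(ξ)y(ξ) ≤ Hξ, where X^{LP} and Y^{LP} are the continuous relaxations of X and Y. Then v ≤ Φ(w^r),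 where Φ(w^r) = inf over ψ ≥ 0, x ∈ X, y^k ∈ Y (k = 1..K) of cᵀψ + sup_{ξ̄ ∈ Ξ} min_{k=1..K} { sup_{ξ ∈ Ξ(w^r, ξ̄)} ( ξᵀC x + ξᵀD w^r + ξᵀQ y^k − ψᵀ g(ξ) ) subject to T(ξ)x + V(ξ)w^r + W(ξ)y^k ≤ Hξ for all ξ ∈ Ξ(w^r, ξ̄), the k-th inner value being +∞ if this robust feasibility fails }. -/
open Matrix

noncomputable section

/-!
Every candidate `(ψ, x, y¹, …, yᴷ)` for `Φ(w^r)` yields feasible points of the relaxed program.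
If its value is below a real `θ`, then for each sample `ξ̂ ∈ Ξ̂ ⊆ Ξ` the term of the outer
supremum at `ξ̄ = ξ̂` is below `θ`, so some policy `yᵏ` is robustly feasible on the cell
`Ξ(w^r, ξ̂)`, which contains `ξ̂`, and its worst-case value there, hence its value at `ξ̂`, is
below `θ`. Taking `y(ξ̂) := yᵏ` gives a feasible point of value `θ`, as `X ⊆ X^{LP}` and
`Y ⊆ Y^{LP}`; since `θ` was arbitrary, `v ≤ Φ(w^r)`.
-/

theorem self_mem_obsSet {n : ℕ} {Ξ : Set (Fin n → ℝ)} (w : Fin n → ℝ) {ξ : Fin n → ℝ}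
    (hξ : ξ ∈ Ξ) : ξ ∈ obsSet Ξ w ξ :=
  ⟨hξ, rfl⟩

theorem EReal.sInf_le_of_forall_lt_coe_mem {s : Set EReal} {e : EReal}
    (h : ∀ θ : ℝ, e < θ → (θ : EReal) ∈ s) : sInf s ≤ e := by
  refine le_of_forall_gt_imp_ge_of_dense fun a hea => ?_
  obtain ⟨θ, heθ, hθa⟩ := EReal.exists_between_coe_real hea
  exact (sInf_le (h θ heθ)).trans hθa.le

theorem exists_feasible_lt_of_iSup_iInf_robust_lt {α ι : Type*} {Ξ : Set α}
    {cell : α → Set α} (hcell : ∀ ξ ∈ Ξ, ξ ∈ cell ξ) (feas : α → ι → Prop) (f : α → ι → EReal)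
    {θ : EReal}
    (h : ⨆ ξb ∈ Ξ, ⨅ (k : ι) (_ : ∀ ξ ∈ cell ξb, feas ξ k), ⨆ ξ ∈ cell ξb, f ξ k < θ)
    {ξ : α} (hξ : ξ ∈ Ξ) : ∃ k, feas ξ k ∧ f ξ k < θ := by
  have hcellξ : ⨅ (k : ι) (_ : ∀ ξ' ∈ cell ξ, feas ξ' k), ⨆ ξ' ∈ cell ξ, f ξ' k < θ :=
    (le_biSup (fun ξb => ⨅ (k : ι) (_ : ∀ ξ' ∈ cell ξb, feas ξ' k), ⨆ ξ' ∈ cell ξb, f ξ' k)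
      hξ).trans_lt h
  obtain ⟨k, hk⟩ := iInf_lt_iff.1 hcellξ
  obtain ⟨hrobust, hkθ⟩ := iInf_lt_iff.1 hk
  exact ⟨k, hrobust ξ (hcell ξ hξ), (le_biSup (fun ξ' => f ξ' k) (hcell ξ hξ)).trans_lt hkθ⟩

theorem stmt18_general (Nξ Nx Ny Ng L T K : ℕ)
    (Ξ : Set (Fin Nξ → ℝ))
    (Xset XLP : Set (Fin Nx → ℝ)) (Yset YLP : Set (Fin Ny → ℝ))
    (hXLP : Xset ⊆ XLP)
    (hYLP : Yset ⊆ YLP)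
    (C : Matrix (Fin Nξ) (Fin Nx) ℝ) (D : Matrix (Fin Nξ) (Fin Nξ) ℝ)
    (Q : Matrix (Fin Nξ) (Fin Ny) ℝ) (H : Matrix (Fin L) (Fin Nξ) ℝ)
    (Tm : Fin L → Matrix (Fin Nξ) (Fin Nx) ℝ)
    (Vm : Fin L → Matrix (Fin Nξ) (Fin Nξ) ℝ)
    (Wm : Fin L → Matrix (Fin Nξ) (Fin Ny) ℝ)
    (gst : Fin Ng → Fin T → (Fin Nξ → ℝ)) (c : Fin Ng → ℝ)
    (wr : Fin Nξ → ℝ)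
    (Ξhat : Set (Fin Nξ → ℝ)) (hΞhat : Ξhat ⊆ Ξ) :
    -- v : optimal value of the relaxed linear program
    sInf {v : EReal |
      ∃ (θ : ℝ) (ψ : Fin Ng → ℝ) (x : Fin Nx → ℝ) (w : Fin Nξ → ℝ)
        (y : (Fin Nξ → ℝ) → (Fin Ny → ℝ)),
        0 ≤ ψ ∧ x ∈ XLP ∧ (∀ ξ ∈ Ξhat, y ξ ∈ YLP) ∧
        w = wr ∧
        (∀ ξ ∈ Ξhat,
          c ⬝ᵥ ψ + ξ ⬝ᵥ C.mulVec x + ξ ⬝ᵥ D.mulVec w + ξ ⬝ᵥ Q.mulVec (y ξ)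
            - ψ ⬝ᵥ gfun gst ξ ≤ θ) ∧
        (∀ ξ ∈ Ξhat, ∀ l, rowLHS Tm Vm Wm x w (y ξ) ξ l ≤ H.mulVec ξ l) ∧
        v = ((θ : ℝ) : EReal)}
    ≤
    -- Φ(w^r)
    sInf {v : EReal |
      ∃ (ψ : Fin Ng → ℝ) (x : Fin Nx → ℝ) (y : Fin K → Fin Ny → ℝ),
        0 ≤ ψ ∧ x ∈ Xset ∧ (∀ k, y k ∈ Yset) ∧
        v = ((c ⬝ᵥ ψ : ℝ) : EReal) +
          ⨆ ξb ∈ Ξ, ⨅ (k : Fin K)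
              (_ : ∀ ξ ∈ obsSet Ξ wr ξb, ∀ l,
                rowLHS Tm Vm Wm x wr (y k) ξ l ≤ H.mulVec ξ l),
            ⨆ ξ ∈ obsSet Ξ wr ξb,
              ((ξ ⬝ᵥ C.mulVec x + ξ ⬝ᵥ D.mulVec wr + ξ ⬝ᵥ Q.mulVec (y k)
                - ψ ⬝ᵥ gfun gst ξ : ℝ) : EReal)} := by
  classical
  refine le_sInf ?_
  rintro _ ⟨ψ, x, y, hψ, hx, hy, rfl⟩
  refine EReal.sInf_le_of_forall_lt_coe_mem fun θ hθ => ?_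
  rw [add_comm, ← EReal.lt_sub_iff_add_lt (.inl (EReal.coe_ne_bot _)) (.inl (EReal.coe_ne_top _)),
    ← EReal.coe_sub] at hθ
  have hscen := fun ξ (hξ : ξ ∈ Ξhat) =>
    exists_feasible_lt_of_iSup_iInf_robust_lt (fun _ => self_mem_obsSet wr)
      (fun ξ' k => ∀ l, rowLHS Tm Vm Wm x wr (y k) ξ' l ≤ H.mulVec ξ' l) _ hθ (hΞhat hξ)
  choose k hkfeas hkval using hscen
  refine ⟨θ, ψ, x, wr, fun ξ => if hξ : ξ ∈ Ξhat then y (k ξ hξ) else 0, hψ, hXLP hx,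
    fun ξ hξ => ?_, rfl, fun ξ hξ => ?_, fun ξ hξ => ?_, rfl⟩
  · simpa [hξ] using hYLP (hy _)
  · have hval := EReal.coe_lt_coe_iff.1 (hkval ξ hξ)
    simp only [hξ, dite_true]
    linarith
  · simpa [hξ] using hkfeas ξ hξ

/-- the optimal value of the relaxed (scenario-based, fully adaptive,
continuously relaxed) linear program lower-bounds the value `Φ(w^r)` of the K-adaptability
problem with the measurement decision fixed to `w^r`. -/
theorem stmt18 (Nξ Nx Ny Ng L R T K : ℕ) (hT : 0 < T) (hK : 0 < K)
    (A : Matrix (Fin R) (Fin Nξ) ℝ) (b : Fin R → ℝ)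
    (Ξ : Set (Fin Nξ → ℝ)) (hΞ : Ξ = {ξ | A.mulVec ξ ≤ b})
    (hΞne : Ξ.Nonempty) (hΞbdd : Bornology.IsBounded Ξ)
    (Xset XLP : Set (Fin Nx → ℝ)) (Yset YLP : Set (Fin Ny → ℝ))
    (hXLP : Xset ⊆ XLP) (hXLPconv : Convex ℝ XLP)
    (hYLP : Yset ⊆ YLP) (hYLPconv : Convex ℝ YLP)
    (C : Matrix (Fin Nξ) (Fin Nx) ℝ) (D : Matrix (Fin Nξ) (Fin Nξ) ℝ)
    (Q : Matrix (Fin Nξ) (Fin Ny) ℝ) (H : Matrix (Fin L) (Fin Nξ) ℝ)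
    (Tm : Fin L → Matrix (Fin Nξ) (Fin Nx) ℝ)
    (Vm : Fin L → Matrix (Fin Nξ) (Fin Nξ) ℝ)
    (Wm : Fin L → Matrix (Fin Nξ) (Fin Ny) ℝ)
    (gst : Fin Ng → Fin T → (Fin Nξ → ℝ)) (c : Fin Ng → ℝ)
    (wr : Fin Nξ → ℝ) (hwr : ∀ i, wr i = 0 ∨ wr i = 1)
    (Ξhat : Set (Fin Nξ → ℝ)) (hΞhatfin : Ξhat.Finite) (hΞhat : Ξhat ⊆ Ξ) :
    -- v : optimal value of the relaxed linear program
    sInf {v : EReal |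
      ∃ (θ : ℝ) (ψ : Fin Ng → ℝ) (x : Fin Nx → ℝ) (w : Fin Nξ → ℝ)
        (y : (Fin Nξ → ℝ) → (Fin Ny → ℝ)),
        0 ≤ ψ ∧ x ∈ XLP ∧ (∀ ξ ∈ Ξhat, y ξ ∈ YLP) ∧
        w = wr ∧
        (∀ ξ ∈ Ξhat,
          c ⬝ᵥ ψ + ξ ⬝ᵥ C.mulVec x + ξ ⬝ᵥ D.mulVec w + ξ ⬝ᵥ Q.mulVec (y ξ)
            - ψ ⬝ᵥ gfun gst ξ ≤ θ) ∧
        (∀ ξ ∈ Ξhat, ∀ l, rowLHS Tm Vm Wm x w (y ξ) ξ l ≤ H.mulVec ξ l) ∧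
        v = ((θ : ℝ) : EReal)}
    ≤
    -- Φ(w^r)
    sInf {v : EReal |
      ∃ (ψ : Fin Ng → ℝ) (x : Fin Nx → ℝ) (y : Fin K → Fin Ny → ℝ),
        0 ≤ ψ ∧ x ∈ Xset ∧ (∀ k, y k ∈ Yset) ∧
        v = ((c ⬝ᵥ ψ : ℝ) : EReal) +
          ⨆ ξb ∈ Ξ, ⨅ (k : Fin K)
              (_ : ∀ ξ ∈ obsSet Ξ wr ξb, ∀ l,
                rowLHS Tm Vm Wm x wr (y k) ξ l ≤ H.mulVec ξ l),
            ⨆ ξ ∈ obsSet Ξ wr ξb,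
              ((ξ ⬝ᵥ C.mulVec x + ξ ⬝ᵥ D.mulVec wr + ξ ⬝ᵥ Q.mulVec (y k)
                - ψ ⬝ᵥ gfun gst ξ : ℝ) : EReal)} :=
  stmt18_general Nξ Nx Ny Ng L T K Ξ Xset XLP Yset YLP hXLP hYLP C D Q H Tm Vm Wm gst c wr Ξhat
    hΞhat

end
end
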